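/- arXiv:2305.09841 — 2 statements merged into one kernel-verified Lean document; each statement's English description precedes it below -/
import Mathlib

section
/- Let v ∈ ℝ³ with |v| ≥ 2R and let e be a unit vector parallel to v. Then the set {w ∈ B_R(v) : 1 − ((w·e)/|w|)² < ε} has Lebesgue measure at most C R ε |v|² for an absolute constant C; consequently, for ε ≈ μ/(2R|v|²) this set has measure less than μ/2. -/
/-!
In an orthonormal basis whose first vector is `e`, a point `w` of the ball `B_R(t e)` has first
coordinate within `R` of `t`, and `‖w‖ < |t| + R`. If `w` also lies in the cone, each remaining
coordinate satisfies `w_j² ≤ ‖w‖² - ⟪w, e⟫² < ε ‖w‖²`, so `|w_j| ≤ √ε (|t| + R)`. The set therefore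
lies in a box of volume `2R (2 √ε (|t| + R))²`, which is at most `18 R ε |v|²` when `|v| ≥ 2R`.
-/

open MeasureTheory Real

local notation "V" => EuclideanSpace ℝ (Fin 3)

open Metric Module
open scoped RealInnerProductSpace

section

variable {E : Type*} [NormedAddCommGroup E] [InnerProductSpace ℝ E]

theorem OrthonormalBasis.exists_apply_zero_eq [FiniteDimensional ℝ E] {n : ℕ}
    (hn : finrank ℝ E = n + 1) {e : E} (he : ‖e‖ = 1) :
    ∃ b : OrthonormalBasis (Fin (n + 1)) ℝ E, b 0 = e := by
  have hcard : finrank ℝ E = Fintype.card (Fin (n + 1)) := by simpa using hn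
  have horth : Orthonormal ℝ (({0} : Set (Fin (n + 1))).domRestrict fun _ => e) :=
    ⟨fun _ => he, fun {i j} hij => absurd (Subsingleton.elim i j) hij⟩
  obtain ⟨b, hb⟩ := horth.exists_orthonormalBasis_extension_of_card_eq hcard
  exact ⟨b, hb 0 rfl⟩

theorem OrthonormalBasis.sq_repr_le {ι : Type*} [Fintype ι] (b : OrthonormalBasis ι ℝ E)
    {i j : ι} (hij : i ≠ j) (w : E) : b.repr w j ^ 2 ≤ ‖w‖ ^ 2 - ⟪b i, w⟫ ^ 2 := by
  have hsum := Finset.add_le_sum (f := fun k => ⟪b k, w⟫ ^ 2) (fun k _ => sq_nonneg _)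
    (Finset.mem_univ i) (Finset.mem_univ j) hij
  rw [b.sum_sq_inner_right] at hsum
  rw [b.repr_apply_apply]
  linarith

theorem OrthonormalBasis.volume_setOf_repr_mem [FiniteDimensional ℝ E] [MeasurableSpace E]
    [BorelSpace E] {ι : Type*} [Fintype ι] (b : OrthonormalBasis ι ℝ E) (s : ι → Set ℝ) :
    volume {w | ∀ i, b.repr w i ∈ s i} = ∏ i, volume (s i) := by
  rw [← volume_pi_pi,
    ← (EuclideanSpace.volume_preserving_symm_measurableEquiv_toLp ι).measure_preimage_equiv,
    ← b.measurePreserving_measurableEquiv.measure_preimage_equiv]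
  congr 1
  ext w
  simp [OrthonormalBasis.measurableEquiv]

theorem sq_norm_sub_sq_inner_lt_of_cone {w e : E} {ε : ℝ} (hw : w ≠ 0)
    (h : 1 - (⟪w, e⟫ / ‖w‖) ^ 2 < ε) : ‖w‖ ^ 2 - ⟪w, e⟫ ^ 2 < ε * ‖w‖ ^ 2 := by
  have hw2 : 0 < ‖w‖ ^ 2 := by positivity
  rw [div_pow, sub_lt_iff_lt_add, ← sub_lt_iff_lt_add', lt_div_iff₀ hw2] at h
  linarith

theorem abs_inner_sub_lt_of_mem_ball_smul {e w : E} {t R : ℝ} (he : ‖e‖ = 1)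
    (hw : w ∈ ball (t • e) R) : |⟪e, w⟫ - t| < R := by
  have hinner : ⟪e, w - t • e⟫ = ⟪e, w⟫ - t := by
    rw [inner_sub_right, real_inner_smul_right, real_inner_self_eq_norm_sq, he]
    ring
  calc |⟪e, w⟫ - t| = |⟪e, w - t • e⟫| := by rw [hinner]
    _ ≤ ‖e‖ * ‖w - t • e‖ := abs_real_inner_le_norm _ _
    _ < R := by rwa [he, one_mul, ← dist_eq_norm, ← mem_ball]

theorem ball_smul_inter_cone_subset {n : ℕ} (b : OrthonormalBasis (Fin (n + 1)) ℝ E) {e : E}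
    (hb : b 0 = e) {t R ε : ℝ} (hR : R ≤ |t|) (hε : 0 ≤ ε) :
    {w | w ∈ ball (t • e) R ∧ 1 - (⟪w, e⟫ / ‖w‖) ^ 2 < ε} ⊆
      {w | ∀ i, b.repr w i ∈
        (Fin.cons (closedBall t R) fun _ => closedBall 0 (√ε * (|t| + R)) :
          Fin (n + 1) → Set ℝ) i} := by
  have he : ‖e‖ = 1 := hb ▸ b.orthonormal.1 0
  rintro w ⟨hw, hcone⟩ i
  have hw_norm : ‖w‖ < |t| + R := by
    simpa [norm_smul, he] using norm_lt_of_mem_ball hw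
  refine Fin.cases ?_ (fun j => ?_) i
  · rw [Fin.cons_zero, mem_closedBall, Real.dist_eq, b.repr_apply_apply, hb]
    exact (abs_inner_sub_lt_of_mem_ball_smul he hw).le
  · have hw0 : w ≠ 0 := by
      rintro rfl
      simp [norm_smul, he] at hw
      linarith
    have hperp := sq_norm_sub_sq_inner_lt_of_cone hw0 hcone
    rw [Fin.cons_succ, mem_closedBall_zero_iff, Real.norm_eq_abs]
    refine abs_le_of_sq_le_sq ?_ (mul_nonneg (sqrt_nonneg ε) (by linarith [norm_nonneg w]))
    calc b.repr w j.succ ^ 2 ≤ ‖w‖ ^ 2 - ⟪e, w⟫ ^ 2 :=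
          hb ▸ b.sq_repr_le (Fin.succ_ne_zero j).symm w
      _ ≤ ε * ‖w‖ ^ 2 := by rw [real_inner_comm]; exact hperp.le
      _ ≤ (√ε * (|t| + R)) ^ 2 := by
        rw [mul_pow, sq_sqrt hε]
        gcongr

theorem volume_ball_smul_inter_cone_le [FiniteDimensional ℝ E] [MeasurableSpace E] [BorelSpace E]
    {n : ℕ} (hn : finrank ℝ E = n + 1) {e : E} (he : ‖e‖ = 1) {t R ε : ℝ} (hR₀ : 0 ≤ R)
    (hR : R ≤ |t|) (hε : 0 ≤ ε) :
    volume {w | w ∈ ball (t • e) R ∧ 1 - (⟪w, e⟫ / ‖w‖) ^ 2 < ε} ≤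
      ENNReal.ofReal (2 * R * (2 * (√ε * (|t| + R))) ^ n) := by
  obtain ⟨b, hb⟩ := OrthonormalBasis.exists_apply_zero_eq hn he
  calc _ ≤ _ := measure_mono (ball_smul_inter_cone_subset b hb hR hε)
    _ = _ := by
      rw [b.volume_setOf_repr_mem, Fin.prod_univ_succ]
      simp only [Fin.cons_zero, Fin.cons_succ, Real.volume_closedBall, Finset.prod_const,
        Finset.card_univ, Fintype.card_fin]
      rw [← ENNReal.ofReal_pow (by positivity), ← ENNReal.ofReal_mul (by positivity)]

end

theorem stmt_5 :
    ∃ C : ℝ, 0 < C ∧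
      ∀ (R : ℝ), 0 < R → ∀ (v e : V), ‖e‖ = 1 → (∃ t : ℝ, v = t • e) →
        2 * R ≤ ‖v‖ →
        (∀ ε : ℝ, 0 < ε →
          volume {w : V | w ∈ Metric.ball v R ∧ 1 - ((inner ℝ w e : ℝ) / ‖w‖) ^ 2 < ε} ≤
            ENNReal.ofReal (C * R * ε * ‖v‖ ^ 2)) ∧
        (∀ μ : ℝ, 0 < μ →
          volume {w : V | w ∈ Metric.ball v R ∧
              1 - ((inner ℝ w e : ℝ) / ‖w‖) ^ 2 < μ / (4 * C * R * ‖v‖ ^ 2)} <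
            ENNReal.ofReal (μ / 2)) := by
  refine ⟨18, by norm_num, ?_⟩
  rintro R hR v e he ⟨t, rfl⟩ hRv
  rw [norm_smul, he, mul_one, Real.norm_eq_abs] at hRv ⊢
  have bound : ∀ ε : ℝ, 0 < ε →
      volume {w : V | w ∈ ball (t • e) R ∧ 1 - (⟪w, e⟫ / ‖w‖) ^ 2 < ε} ≤
        ENNReal.ofReal (18 * R * ε * |t| ^ 2) := by
    intro ε hε
    refine (volume_ball_smul_inter_cone_le finrank_euclideanSpace_fin he hR.le (by linarith)
      hε.le).trans (ENNReal.ofReal_le_ofReal ?_)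
    have hsq : (2 * (√ε * (|t| + R))) ^ 2 = 4 * ε * (|t| + R) ^ 2 := by
      rw [mul_pow, mul_pow, sq_sqrt hε.le]; ring
    have hgrowth : (|t| + R) ^ 2 ≤ 9 / 4 * |t| ^ 2 := by nlinarith
    rw [hsq]
    nlinarith [mul_le_mul_of_nonneg_left hgrowth (mul_pos hR hε).le]
  have ht : 0 < |t| := by linarith
  refine ⟨bound, fun μ hμ => (bound _ (by positivity)).trans_lt ?_⟩
  rw [ENNReal.ofReal_lt_ofReal_iff (by positivity)]
  field_simp
  linarith
end

section
/- Anisotropic upper bound: let f be the standard Gaussian on ℝ³, a(z) = |z|^{-1}(I − z⊗z/|z|²), and w = Ne₁ with N ≥ 2. Then diag(N,1,1) [∫_{B_{N/2}} a(w−v) f(v) dv] diag(N,1,1) ≤ (C/N) I as symmetric matrices, for an absolute constant C. -/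
open MeasureTheory Real

local notation "V" => EuclideanSpace ℝ (Fin 3)

/-- The Coulomb Landau kernel `a_{ij}(z) = |z|⁻¹ (δ_{ij} − z_i z_j / |z|²)`. -/
noncomputable def landauKernel (z : EuclideanSpace ℝ (Fin 3)) (i j : Fin 3) : ℝ :=
  ‖z‖⁻¹ * ((if i = j then 1 else 0) - z i * z j / ‖z‖ ^ 2)

/-- The standard Gaussian density on `ℝ³`. -/
noncomputable def stdGaussian (v : EuclideanSpace ℝ (Fin 3)) : ℝ :=
  (2 * π) ^ (-(3 : ℝ) / 2) * Real.exp (-‖v‖ ^ 2 / 2)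

/-! For `|v| < N/2` the point `z = N e₁ - v` satisfies `|z| ≥ N/2`, and its components
transverse to `e₁` are those of `-v`. Since `e₁ᵗ a(z)` only sees the transverse part of `z`, the
entries of `a(z)` carrying the weight `N²` (resp. `N`) are `O(|v|²/N³)` (resp. `O(|v|/N²)`), and
the others are `O(1/N)`. So every entry of `diag(N,1,1) a(z) diag(N,1,1)` is pointwise at most
`8/N · (1 + |v|²)`, and after integration against the Gaussian at most `8/N` times its moment
`∫ (1 + |v|²) f`. -/

-- The paper's `e₁`: coordinates are indexed by `Fin 3`, starting at `0`.
local notation "e₀" => EuclideanSpace.single (0 : Fin 3) (1 : ℝ)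

lemma half_norm_le_norm_sub {E : Type*} [SeminormedAddCommGroup E] {w v : E}
    (h : ‖v‖ ≤ ‖w‖ / 2) : ‖w‖ / 2 ≤ ‖w - v‖ := by
  linarith [norm_sub_norm_le w v]

lemma abs_apply_le_norm {ι : Type*} [Fintype ι] (z : EuclideanSpace ℝ ι) (i : ι) :
    |z i| ≤ ‖z‖ := by
  simpa only [Real.norm_eq_abs] using PiLp.norm_apply_le z i

lemma sum_sum_mul_mul_le_of_abs_le {ι : Type*} [Fintype ι] {M : ι → ι → ℝ} {K : ℝ}
    (hM : ∀ i j, |M i j| ≤ K) (ξ : ι → ℝ) :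
    ∑ i, ∑ j, ξ i * M i j * ξ j ≤ Fintype.card ι * K * ∑ i, ξ i ^ 2 := by
  have hterm : ∀ i j, ξ i * M i j * ξ j ≤ K * (ξ i ^ 2 + ξ j ^ 2) / 2 := by
    intro i j
    have hK : 0 ≤ K := (abs_nonneg _).trans (hM i j)
    calc ξ i * M i j * ξ j ≤ |M i j| * (|ξ i| * |ξ j|) := by
          rw [← abs_mul, ← abs_mul]
          exact (le_abs_self _).trans_eq (by ring_nf)
      _ ≤ K * ((ξ i ^ 2 + ξ j ^ 2) / 2) := by
          refine mul_le_mul (hM i j) ?_ (by positivity) hK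
          nlinarith [sq_nonneg (|ξ i| - |ξ j|), sq_abs (ξ i), sq_abs (ξ j)]
      _ = K * (ξ i ^ 2 + ξ j ^ 2) / 2 := by ring
  calc ∑ i, ∑ j, ξ i * M i j * ξ j ≤ ∑ i, ∑ j, K * (ξ i ^ 2 + ξ j ^ 2) / 2 :=
        Finset.sum_le_sum fun i _ => Finset.sum_le_sum fun j _ => hterm i j
    _ = Fintype.card ι * K * ∑ i, ξ i ^ 2 := by
        simp only [mul_add, add_div, Finset.sum_add_distrib, ← Finset.sum_div,
          ← Finset.mul_sum, Finset.sum_const, Finset.card_univ, nsmul_eq_mul]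
        ring

lemma landauKernel_comm (z : V) (i j : Fin 3) : landauKernel z i j = landauKernel z j i := by
  simp only [landauKernel, eq_comm (a := i), mul_comm (z i)]

lemma landauKernel_of_ne (z : V) {i j : Fin 3} (h : i ≠ j) :
    landauKernel z i j = -(z i * z j) / ‖z‖ ^ 3 := by
  rw [landauKernel, if_neg h]
  ring

lemma landauKernel_zero_zero (z : V) : landauKernel z 0 0 = (z 1 ^ 2 + z 2 ^ 2) / ‖z‖ ^ 3 := by
  rcases eq_or_ne z 0 with rfl | hz
  · simp [landauKernel]
  have hnorm : ‖z‖ ^ 2 = z 0 ^ 2 + z 1 ^ 2 + z 2 ^ 2 := by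
    rw [EuclideanSpace.real_norm_sq_eq, Fin.sum_univ_three]
  have hpos : 0 < ‖z‖ := norm_pos_iff.mpr hz
  rw [landauKernel, if_pos rfl]
  field_simp
  linear_combination hnorm

lemma abs_landauKernel_le (z : V) (i j : Fin 3) : |landauKernel z i j| ≤ 2 / ‖z‖ := by
  rcases eq_or_ne z 0 with rfl | hz
  · simp [landauKernel]
  have hpos : 0 < ‖z‖ := norm_pos_iff.mpr hz
  have hδ : |(if i = j then (1 : ℝ) else 0)| ≤ 1 := by split_ifs <;> simp
  have hzz : |z i * z j / ‖z‖ ^ 2| ≤ 1 := by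
    rw [abs_div, abs_mul, abs_of_pos (pow_pos hpos 2), div_le_one (pow_pos hpos 2), sq]
    exact mul_le_mul (abs_apply_le_norm z i) (abs_apply_le_norm z j) (abs_nonneg _) hpos.le
  calc |landauKernel z i j| ≤ ‖z‖⁻¹ * (1 + 1) := by
        rw [landauKernel, abs_mul, abs_inv, abs_norm]
        gcongr
        exact (abs_sub _ _).trans (add_le_add hδ hzz)
    _ = 2 / ‖z‖ := by ring

def anisotropicWeight (N : ℝ) (i : Fin 3) : ℝ := if i = 0 then N else 1

lemma anisotropicWeight_nonneg {N : ℝ} (hN : 0 ≤ N) (i : Fin 3) :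
    0 ≤ anisotropicWeight N i := by
  unfold anisotropicWeight
  split_ifs <;> linarith

lemma smul_single_zero_sub_apply_of_ne (N : ℝ) (v : V) {k : Fin 3} (hk : k ≠ 0) :
    (N • e₀ - v) k = -v k := by
  simp [hk]

section ShiftedKernel

variable {N : ℝ} {v : V}

lemma half_le_norm_smul_single_zero_sub (hN : 0 < N) (hv : ‖v‖ < N / 2) :
    N / 2 ≤ ‖N • e₀ - v‖ := by
  have hw : ‖N • e₀‖ = N := by simp [norm_smul, hN.le]
  simpa only [hw] using half_norm_le_norm_sub (w := N • e₀) (v := v) (by rw [hw]; exact hv.le)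

lemma mul_self_mul_abs_landauKernel_zero_zero_le (hN : 0 < N) (hv : ‖v‖ < N / 2) :
    N * N * |landauKernel (N • e₀ - v) 0 0|
      ≤ 8 / N * ‖v‖ ^ 2 := by
  have hr := half_le_norm_smul_single_zero_sub hN hv
  have htrans : (N • e₀ - v) 1 ^ 2
      + (N • e₀ - v) 2 ^ 2 ≤ ‖v‖ ^ 2 := by
    rw [smul_single_zero_sub_apply_of_ne N v (by decide : (1 : Fin 3) ≠ 0),
      smul_single_zero_sub_apply_of_ne N v (by decide : (2 : Fin 3) ≠ 0),
      EuclideanSpace.real_norm_sq_eq, Fin.sum_univ_three]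
    nlinarith [sq_nonneg (v 0)]
  rw [landauKernel_zero_zero, abs_of_nonneg (by positivity)]
  calc N * N * (_ / ‖N • e₀ - v‖ ^ 3)
      ≤ N * N * (‖v‖ ^ 2 / (N / 2) ^ 3) := by gcongr
    _ = 8 / N * ‖v‖ ^ 2 := by field_simp; ring

lemma mul_abs_landauKernel_zero_le (hN : 0 < N) (hv : ‖v‖ < N / 2) {j : Fin 3} (hj : j ≠ 0) :
    N * |landauKernel (N • e₀ - v) 0 j| ≤ 4 / N * ‖v‖ := by
  set z := N • e₀ - v
  have hr : N / 2 ≤ ‖z‖ := half_le_norm_smul_single_zero_sub hN hv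
  have hzj : |z j| ≤ ‖v‖ := by
    rw [smul_single_zero_sub_apply_of_ne N v hj, abs_neg]
    exact abs_apply_le_norm v j
  have hpos : 0 < ‖z‖ := by linarith
  rw [landauKernel_of_ne z hj.symm, abs_div, abs_neg, abs_mul, abs_of_pos (pow_pos hpos 3)]
  calc N * (|z 0| * |z j| / ‖z‖ ^ 3) ≤ N * (‖z‖ * ‖v‖ / ‖z‖ ^ 3) := by
        gcongr
        exact abs_apply_le_norm z 0
    _ = N * (‖v‖ / ‖z‖ ^ 2) := by field_simp
    _ ≤ N * (‖v‖ / (N / 2) ^ 2) := by gcongr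
    _ = 4 / N * ‖v‖ := by field_simp; ring

lemma anisotropicWeight_mul_mul_abs_landauKernel_le (hN : 0 < N) (hv : ‖v‖ < N / 2)
    (i j : Fin 3) :
    anisotropicWeight N i * anisotropicWeight N j *
        |landauKernel (N • e₀ - v) i j|
      ≤ 8 / N * (1 + ‖v‖ ^ 2) := by
  have hlin : 4 / N * ‖v‖ ≤ 8 / N * (1 + ‖v‖ ^ 2) := by
    rw [div_mul_eq_mul_div, div_mul_eq_mul_div, div_le_div_iff_of_pos_right hN]
    nlinarith [sq_nonneg (‖v‖ - 1)]
  have hquad : 8 / N * ‖v‖ ^ 2 ≤ 8 / N * (1 + ‖v‖ ^ 2) := by gcongr; linarith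
  rcases eq_or_ne i 0 with rfl | hi <;> rcases eq_or_ne j 0 with rfl | hj
  · simpa [anisotropicWeight] using
      (mul_self_mul_abs_landauKernel_zero_zero_le hN hv).trans hquad
  · simpa [anisotropicWeight, hj] using (mul_abs_landauKernel_zero_le hN hv hj).trans hlin
  · simpa [anisotropicWeight, hi, landauKernel_comm _ i] using
      (mul_abs_landauKernel_zero_le hN hv hi).trans hlin
  · have hr := half_le_norm_smul_single_zero_sub hN hv
    calc anisotropicWeight N i * anisotropicWeight N j * |landauKernel _ i j|
        = |landauKernel (N • e₀ - v) i j| := by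
          simp [anisotropicWeight, hi, hj]
      _ ≤ 2 / (N / 2) := (abs_landauKernel_le _ i j).trans (by gcongr)
      _ = 4 / N * 1 := by ring
      _ ≤ 8 / N * (1 + ‖v‖ ^ 2) := by gcongr <;> nlinarith [sq_nonneg ‖v‖]

end ShiftedKernel

lemma integrable_exp_neg_sq_norm_div_four : Integrable (fun v : V => rexp (-‖v‖ ^ 2 / 4)) := by
  have h := (GaussianFourier.integrable_cexp_neg_mul_sq_norm_add
    (b := ((4 : ℝ)⁻¹ : ℂ)) (by norm_num) 0 (0 : V)).norm
  convert h using 2 with v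
  simp only [Complex.norm_exp]
  norm_cast
  ring_nf

lemma one_add_mul_exp_neg_half_le (x : ℝ) : (1 + x) * rexp (-x / 2) ≤ 4 * rexp (-x / 4) := by
  have hx : 1 + x ≤ 4 * rexp (x / 4) := by linarith [add_one_le_exp (x / 4)]
  calc (1 + x) * rexp (-x / 2) ≤ 4 * rexp (x / 4) * rexp (-x / 2) := by gcongr
    _ = 4 * rexp (-x / 4) := by rw [mul_assoc, ← exp_add]; ring_nf

lemma integrable_one_add_sq_norm_mul_stdGaussian :
    Integrable (fun v : V => (1 + ‖v‖ ^ 2) * stdGaussian v) := by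
  refine (integrable_exp_neg_sq_norm_div_four.const_mul (4 * (2 * π) ^ (-(3 : ℝ) / 2))).mono'
    (by unfold stdGaussian; fun_prop) (Filter.Eventually.of_forall fun v => ?_)
  rw [stdGaussian, norm_of_nonneg (by positivity)]
  nlinarith [one_add_mul_exp_neg_half_le (‖v‖ ^ 2),
    rpow_pos_of_pos (by positivity : 0 < 2 * π) (-(3 : ℝ) / 2)]

lemma abs_anisotropicWeight_mul_setIntegral_le {N : ℝ} (hN : 0 < N) (i j : Fin 3) :
    |anisotropicWeight N i * anisotropicWeight N j *
        ∫ v in Metric.ball (0 : V) (N / 2),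
          landauKernel (N • e₀ - v) i j * stdGaussian v|
      ≤ 8 / N * ∫ v, (1 + ‖v‖ ^ 2) * stdGaussian v := by
  have hint := integrable_one_add_sq_norm_mul_stdGaussian.const_mul (8 / N)
  have hbound : ∀ v ∈ Metric.ball (0 : V) (N / 2),
      ‖anisotropicWeight N i * anisotropicWeight N j *
          (landauKernel (N • e₀ - v) i j * stdGaussian v)‖
        ≤ 8 / N * ((1 + ‖v‖ ^ 2) * stdGaussian v) := by
    intro v hv
    rw [mem_ball_zero_iff] at hv
    have hf : 0 ≤ stdGaussian v := by unfold stdGaussian; positivity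
    have hw := mul_nonneg (anisotropicWeight_nonneg hN.le i) (anisotropicWeight_nonneg hN.le j)
    calc _ = anisotropicWeight N i * anisotropicWeight N j *
          |landauKernel (N • e₀ - v) i j| * stdGaussian v := by
          rw [norm_eq_abs, abs_mul, abs_of_nonneg hw, abs_mul, abs_of_nonneg hf]
          ring
      _ ≤ 8 / N * (1 + ‖v‖ ^ 2) * stdGaussian v :=
          mul_le_mul_of_nonneg_right (anisotropicWeight_mul_mul_abs_landauKernel_le hN hv i j) hf
      _ = _ := by ring
  rw [← integral_const_mul, ← integral_const_mul, ← norm_eq_abs]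
  calc _ ≤ ∫ v in Metric.ball (0 : V) (N / 2), 8 / N * ((1 + ‖v‖ ^ 2) * stdGaussian v) :=
        norm_integral_le_of_norm_le hint.integrableOn
          (ae_restrict_of_forall_mem measurableSet_ball hbound)
    _ ≤ _ := setIntegral_le_integral hint (Filter.Eventually.of_forall fun v => by
        unfold stdGaussian; positivity)

theorem stmt_17 :
    ∃ C : ℝ, 0 < C ∧
      ∀ (N : ℕ), 2 ≤ N →
        ∀ ξ : Fin 3 → ℝ,
          (∑ i : Fin 3, ∑ j : Fin 3,
              ξ i * (if i = 0 then (N : ℝ) else 1) *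
                (∫ v in Metric.ball (0 : V) ((N : ℝ) / 2),
                  landauKernel ((N : ℝ) • EuclideanSpace.single (0 : Fin 3) 1 - v) i j *
                    stdGaussian v) *
                (if j = 0 then (N : ℝ) else 1) * ξ j) ≤
            C / (N : ℝ) * ∑ i : Fin 3, ξ i ^ 2 := by
  set m := ∫ v, (1 + ‖v‖ ^ 2) * stdGaussian v
  have hm : 0 < m := integral_pos_of_integrable_nonneg_nonzero (x := 0)
    (by unfold stdGaussian; fun_prop) integrable_one_add_sq_norm_mul_stdGaussian
    (fun v => by unfold stdGaussian; positivity) (by unfold stdGaussian; positivity)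
  refine ⟨24 * m, by positivity, fun N hN ξ => ?_⟩
  have hNpos : (0 : ℝ) < N := by positivity
  calc _ = ∑ i, ∑ j, ξ i * (anisotropicWeight N i * anisotropicWeight N j *
          ∫ v in Metric.ball (0 : V) ((N : ℝ) / 2),
            landauKernel ((N : ℝ) • e₀ - v) i j * stdGaussian v) * ξ j :=
        Finset.sum_congr rfl fun i _ => Finset.sum_congr rfl fun j _ => by
          unfold anisotropicWeight; ring
    _ ≤ Fintype.card (Fin 3) * (8 / N * m) * ∑ i, ξ i ^ 2 :=
        sum_sum_mul_mul_le_of_abs_le (abs_anisotropicWeight_mul_setIntegral_le hNpos) ξ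
    _ = 24 * m / N * ∑ i, ξ i ^ 2 := by rw [Fintype.card_fin]; ring
end
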